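/- arXiv:1703.02263 — 2 statements merged into one kernel-verified Lean document; each statement's English description precedes it below -/
import Mathlib

section
/- Let M = K(a,b,c,d) be a 4×4 K3 Markov matrix with x = a+b−c−d, y = a−b+c−d, z = a−b−c+d. If x > 0, y > 0 and z > 0, then the matrix Q := S · diag(0, log x, log y, log z) · S⁻¹ is a real matrix with K3 form satisfying exp(Q) = M. -/
/-!
The Hadamard matrix `S` simultaneously diagonalises all K3 matrices: `K(a,b,c,d)` equals
`S · diag(a+b+c+d, x, y, z) · S⁻¹`, and conversely every such conjugate of a diagonal matrix has
K3 form. Since `exp` commutes with conjugation and acts entrywise on diagonal matrices,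
`exp Q = S · diag(1, x, y, z) · S⁻¹`, which is `M` because the rows of `M` sum to `1`.
-/

/-- The Kimura 3ST matrix `K(a,b,c,d)`. -/
def K {α : Type*} (a b c d : α) : Matrix (Fin 4) (Fin 4) α :=
  !![a, b, c, d;
     b, a, d, c;
     c, d, a, b;
     d, c, b, a]

/-- The 4×4 Hadamard matrix `S` (over ℝ). -/
def S : Matrix (Fin 4) (Fin 4) ℝ :=
  !![1,  1,  1,  1;
     1,  1, -1, -1;
     1, -1,  1, -1;
     1, -1, -1,  1]

/-- A Markov matrix: nonnegative entries, rows sum to 1. -/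
def IsMarkov {k : ℕ} (M : Matrix (Fin k) (Fin k) ℝ) : Prop :=
  (∀ i j, 0 ≤ M i j) ∧ ∀ i, ∑ j, M i j = 1

lemma S_mul_self : S * S = (4 : ℝ) • 1 := by
  ext i j
  fin_cases i <;> fin_cases j <;> simp [S, Matrix.mul_apply, Fin.sum_univ_four] <;> norm_num

lemma S_mul_inv_four_smul_S : S * ((4 : ℝ)⁻¹ • S) = 1 := by
  rw [Matrix.mul_smul, S_mul_self, smul_smul, inv_mul_cancel₀ four_ne_zero, one_smul]

lemma S_inv : S⁻¹ = (4 : ℝ)⁻¹ • S := Matrix.inv_eq_right_inv S_mul_inv_four_smul_S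

lemma isUnit_S : IsUnit S :=
  (Matrix.isUnit_iff_isUnit_det S).2 (Matrix.isUnit_det_of_right_inverse S_mul_inv_four_smul_S)

lemma S_mul_diagonal_mul_S_inv (p q r s : ℝ) :
    S * Matrix.diagonal ![p, q, r, s] * S⁻¹ =
      K ((p + q + r + s) / 4) ((p + q - r - s) / 4) ((p - q + r - s) / 4) ((p - q - r + s) / 4) := by
  rw [S_inv, Matrix.mul_smul]
  ext i j
  simp only [Matrix.smul_apply, Matrix.mul_apply, Fin.sum_univ_four]
  fin_cases i <;> fin_cases j <;>
    · simp [S, K]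
      ring

lemma K_eq_S_mul_diagonal_mul_S_inv (a b c d : ℝ) :
    K a b c d = S * Matrix.diagonal
      ![a + b + c + d, a + b - c - d, a - b + c - d, a - b - c + d] * S⁻¹ := by
  rw [S_mul_diagonal_mul_S_inv]
  congr 1 <;> ring

lemma IsMarkov.K_sum_eq_one {a b c d : ℝ} (hM : IsMarkov (K a b c d)) : a + b + c + d = 1 := by
  simpa [K, Fin.sum_univ_four] using hM.2 0

lemma exp_vec_zero_log {p q r : ℝ} (hp : 0 < p) (hq : 0 < q) (hr : 0 < r) :
    NormedSpace.exp ![0, Real.log p, Real.log q, Real.log r] = ![1, p, q, r] := by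
  ext i
  fin_cases i <;> simp [Pi.coe_exp, ← Real.exp_eq_exp_ℝ, Real.exp_log, hp, hq, hr]

/-- If the eigenvalues `x, y, z` of a K3 Markov matrix `M = K(a,b,c,d)` are positive, then
`Q := S · diag(0, log x, log y, log z) · S⁻¹` is a real matrix with K3 form and `exp Q = M`. -/
theorem stmt_6 (a b c d : ℝ) (hM : IsMarkov (K a b c d))
    (hx : 0 < a + b - c - d) (hy : 0 < a - b + c - d) (hz : 0 < a - b - c + d) :
    (∃ α β γ δ : ℝ,
      S * Matrix.diagonal
          ![0, Real.log (a + b - c - d), Real.log (a - b + c - d), Real.log (a - b - c + d)]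
        * S⁻¹ = K α β γ δ) ∧
    NormedSpace.exp
      (S * Matrix.diagonal
          ![0, Real.log (a + b - c - d), Real.log (a - b + c - d), Real.log (a - b - c + d)]
        * S⁻¹) = K a b c d := by
  refine ⟨⟨_, _, _, _, S_mul_diagonal_mul_S_inv _ _ _ _⟩, ?_⟩
  rw [Matrix.exp_conj S _ isUnit_S, Matrix.exp_diagonal, exp_vec_zero_log hx hy hz,
    K_eq_S_mul_diagonal_mul_S_inv, hM.K_sum_eq_one]
end

section
/- Fix λ, μ ∈ ℝ with 2π ≤ λ ≤ 2μ, and let M(λ,μ) be the 4×4 real matrix (1/4)·[[1+e^{−λ}−2e^{−μ}, 1+e^{−λ}+2e^{−μ}, 1−e^{−λ}, 1−e^{−λ}], [1+e^{−λ}+2e^{−μ}, 1+e^{−λ}−2e^{−μ}, 1−e^{−λ}, 1−e^{−λ}], [1−e^{−λ}, 1−e^{−λ}, 1+e^{−λ}−2e^{−μ}, 1+e^{−λ}+2e^{−μ}], [1−e^{−λ}, 1−e^{−λ}, 1+e^{−λ}+2e^{−μ}, 1+e^{−λ}−2e^{−μ}]]. Then M(λ,μ) is an embeddable Markov matrix (there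 exists a rate matrix Q with exp(Q) = M(λ,μ)), but there is no rate matrix with K3 form whose exponential equals M(λ,μ). In particular, embeddability of a K3 Markov matrix does not imply K3-embeddability. -/
open Real

/-- A rate matrix: nonnegative off-diagonal entries, rows sum to 0. -/
def IsRate {k : ℕ} (Q : Matrix (Fin k) (Fin k) ℝ) : Prop :=
  (∀ i j, i ≠ j → 0 ≤ Q i j) ∧ ∀ i, ∑ j, Q i j = 0

/-- The matrix `M(λ,μ)`. -/
noncomputable def Mlm (l m : ℝ) : Matrix (Fin 4) (Fin 4) ℝ :=
  (1 / 4 : ℝ) •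
    !![1 + exp (-l) - 2 * exp (-m), 1 + exp (-l) + 2 * exp (-m), 1 - exp (-l), 1 - exp (-l);
       1 + exp (-l) + 2 * exp (-m), 1 + exp (-l) - 2 * exp (-m), 1 - exp (-l), 1 - exp (-l);
       1 - exp (-l), 1 - exp (-l), 1 + exp (-l) - 2 * exp (-m), 1 + exp (-l) + 2 * exp (-m);
       1 - exp (-l), 1 - exp (-l), 1 + exp (-l) + 2 * exp (-m), 1 + exp (-l) - 2 * exp (-m)]

/-! The Hadamard matrix diagonalises every K3 matrix, so the exponential of a real K3 matrix has
positive eigenvalues `exp (a ± b ± c ± d)`. But `M(λ,μ)` is itself a K3 matrix, with eigenvalues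
`1, e^{-λ}, -e^{-μ}, -e^{-μ}`, so it has no K3 logarithm. A logarithm of `M(λ,μ)` that is not of
K3 form is `Q(λ,μ)`, with eigenvalues `0, -λ, -μ + πi, -μ - πi` on eigenvectors spanning the
eigenspaces of `M(λ,μ)`: since `e^{±πi} = -1`, it exponentiates to `M(λ,μ)`, and the off-diagonal
entries `2μ - λ` and `λ - 2π` of `4 Q(λ,μ)` are nonnegative exactly when `2π ≤ λ ≤ 2μ`. -/

namespace Matrix

variable {n : Type*} [Fintype n] [DecidableEq n]

theorem map_exp {𝔸 𝔹 : Type*} [NormedRing 𝔸] [NormedAlgebra ℚ 𝔸] [CompleteSpace 𝔸]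
    [NormedRing 𝔹] [Algebra ℚ 𝔹] (f : 𝔸 →+* 𝔹) (hf : Continuous f)
    (A : Matrix n n 𝔸) : (NormedSpace.exp A).map f = NormedSpace.exp (A.map f) := by
  let : NormedRing (Matrix n n 𝔸) := Matrix.linftyOpNormedRing
  let : NormedAlgebra ℚ (Matrix n n 𝔸) := Matrix.linftyOpNormedAlgebra
  let : NormedRing (Matrix n n 𝔹) := Matrix.linftyOpNormedRing
  -- The operator norm induces the product uniformity only up to unfolding, so completeness
  -- has to be supplied by hand.
  exact @NormedSpace.map_exp _ _ _ _ (by exact (inferInstance : CompleteSpace (n → n → 𝔸)))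
    _ _ _ _ _ f.mapMatrix (continuous_id.matrix_map hf) A

theorem exp_conj_diagonal {𝕂 : Type*} [RCLike 𝕂] (P P' : Matrix n n 𝕂) (hP : P * P' = 1)
    (d : n → 𝕂) :
    NormedSpace.exp (P * diagonal d * P') = P * diagonal (fun i ↦ NormedSpace.exp (d i)) * P' := by
  have hP' : P' = P⁻¹ := (inv_eq_right_inv hP).symm
  rw [hP', exp_conj P _ ⟨⟨P, P', hP, mul_eq_one_comm.mp hP⟩, rfl⟩, exp_diagonal, Pi.exp_def]

end Matrix

open Matrix

def hadamard4 : Matrix (Fin 4) (Fin 4) ℝ :=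
  !![1, 1, 1, 1;
     1, 1, -1, -1;
     1, -1, 1, -1;
     1, -1, -1, 1]

theorem hadamard4_mul_smul_hadamard4 : hadamard4 * ((1 / 4 : ℝ) • hadamard4) = 1 := by
  ext i j
  fin_cases i <;> fin_cases j <;>
    simp [hadamard4, mul_apply, Fin.sum_univ_four, one_apply] <;> norm_num

def k3Eigenvalues (a b c d : ℝ) : Fin 4 → ℝ :=
  ![a + b + c + d, a + b - c - d, a - b + c - d, a - b - c + d]

theorem K_eq_hadamard4_conj (a b c d : ℝ) :
    K a b c d = hadamard4 * diagonal (k3Eigenvalues a b c d) * ((1 / 4 : ℝ) • hadamard4) := by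
  ext i j
  fin_cases i <;> fin_cases j <;>
    simp [K, hadamard4, k3Eigenvalues, mul_apply, Fin.sum_univ_four, vecMul_diagonal] <;> ring

theorem exp_K (a b c d : ℝ) :
    NormedSpace.exp (K a b c d) = hadamard4 *
      diagonal (fun i ↦ rexp (k3Eigenvalues a b c d i)) * ((1 / 4 : ℝ) • hadamard4) := by
  rw [K_eq_hadamard4_conj, exp_conj_diagonal _ _ hadamard4_mul_smul_hadamard4,
    Real.exp_eq_exp_ℝ]

theorem k3Eigenvalues_pos_of_exp_K_eq_K {a b c d a' b' c' d' : ℝ}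
    (h : NormedSpace.exp (K a b c d) = K a' b' c' d') (i : Fin 4) :
    0 < k3Eigenvalues a' b' c' d' i := by
  rw [exp_K, K_eq_hadamard4_conj] at h
  have hinv : (1 / 4 : ℝ) • hadamard4 * hadamard4 = 1 :=
    mul_eq_one_comm.mp hadamard4_mul_smul_hadamard4
  have hdiag := isLeftRegular_of_mul_eq_one hinv (isRightRegular_of_mul_eq_one hinv h)
  rw [← diagonal_apply_eq (k3Eigenvalues a' b' c' d'), ← hdiag, diagonal_apply_eq]
  exact exp_pos _

theorem Mlm_eq_K (l m : ℝ) :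
    Mlm l m = K ((1 + exp (-l) - 2 * exp (-m)) / 4) ((1 + exp (-l) + 2 * exp (-m)) / 4)
      ((1 - exp (-l)) / 4) ((1 - exp (-l)) / 4) := by
  ext i j
  fin_cases i <;> fin_cases j <;> simp [Mlm, K] <;> ring

theorem isMarkov_K {a b c d : ℝ} (ha : 0 ≤ a) (hb : 0 ≤ b) (hc : 0 ≤ c) (hd : 0 ≤ d)
    (hsum : a + b + c + d = 1) : IsMarkov (K a b c d) := by
  refine ⟨fun i j ↦ ?_, fun i ↦ ?_⟩
  · fin_cases i <;> fin_cases j <;> simpa [K]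
  · fin_cases i <;> simp [K, Fin.sum_univ_four] <;> linarith

theorem isMarkov_Mlm {l m : ℝ} (hl : 0 ≤ l) (hm : log 2 ≤ m) : IsMarkov (Mlm l m) := by
  have hel : exp (-l) ≤ 1 := exp_le_one_iff.mpr (by linarith)
  have hem : 2 * exp (-m) ≤ 1 := by
    have := exp_le_exp.mpr (neg_le_neg hm)
    rw [exp_neg (log 2), exp_log two_pos] at this
    linarith
  rw [Mlm_eq_K]
  exact isMarkov_K (by linarith [exp_pos (-l)]) (by positivity) (by linarith) (by linarith)
    (by ring)

theorem exp_K_ne_Mlm (a b c d l m : ℝ) : NormedSpace.exp (K a b c d) ≠ Mlm l m := by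
  intro h
  rw [Mlm_eq_K] at h
  have hpos := k3Eigenvalues_pos_of_exp_K_eq_K h 2
  simp only [k3Eigenvalues, cons_val_two, tail_cons, head_cons] at hpos
  linarith [exp_pos (-m)]

noncomputable def Qlm (l m : ℝ) : Matrix (Fin 4) (Fin 4) ℝ :=
  (1 / 4 : ℝ) •
    !![-(l + 2 * m), 2 * m - l, l + 2 * π, l - 2 * π;
       2 * m - l, -(l + 2 * m), l - 2 * π, l + 2 * π;
       l - 2 * π, l + 2 * π, -(l + 2 * m), 2 * m - l;
       l + 2 * π, l - 2 * π, 2 * m - l, -(l + 2 * m)]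

theorem isRate_Qlm {l m : ℝ} (h1 : 2 * π ≤ l) (h2 : l ≤ 2 * m) : IsRate (Qlm l m) := by
  refine ⟨fun i j hij ↦ ?_, fun i ↦ ?_⟩
  · fin_cases i <;> fin_cases j <;> simp [Qlm] at hij ⊢ <;> linarith [pi_pos]
  · fin_cases i <;> simp [Qlm, Fin.sum_univ_four] <;> ring

open Complex (I)

noncomputable def qlmEigenbasis : Matrix (Fin 4) (Fin 4) ℂ :=
  !![1, 1, 1 - I, 1 + I;
     1, 1, -1 + I, -1 - I;
     1, -1, 1 + I, 1 - I;
     1, -1, -1 - I, -1 + I]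

noncomputable def qlmEigenbasisInv : Matrix (Fin 4) (Fin 4) ℂ :=
  !![1 / 4, 1 / 4, 1 / 4, 1 / 4;
     1 / 4, 1 / 4, -(1 / 4), -(1 / 4);
     (1 + I) / 8, (-1 - I) / 8, (1 - I) / 8, (-1 + I) / 8;
     (1 - I) / 8, (-1 + I) / 8, (1 + I) / 8, (-1 - I) / 8]

theorem qlmEigenbasis_mul_qlmEigenbasisInv : qlmEigenbasis * qlmEigenbasisInv = 1 := by
  ext i j
  fin_cases i <;> fin_cases j <;>
    simp [qlmEigenbasis, qlmEigenbasisInv, mul_apply, Fin.sum_univ_four, one_apply] <;>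
    ring_nf <;> simp [Complex.I_sq] <;> ring_nf

theorem Qlm_map_ofReal (l m : ℝ) :
    (Qlm l m).map (↑) = qlmEigenbasis *
      diagonal ![0, (-l : ℂ), -m + π * I, -m - π * I] * qlmEigenbasisInv := by
  ext i j
  fin_cases i <;> fin_cases j <;>
    simp [Qlm, qlmEigenbasis, qlmEigenbasisInv, mul_apply, Fin.sum_univ_four,
      vecMul_diagonal] <;>
    ring_nf <;> simp [Complex.I_sq] <;> ring_nf

theorem Mlm_map_ofReal (l m : ℝ) :
    (Mlm l m).map (↑) = qlmEigenbasis *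
      diagonal ![1, (rexp (-l) : ℂ), -(rexp (-m) : ℂ), -(rexp (-m) : ℂ)] * qlmEigenbasisInv := by
  ext i j
  fin_cases i <;> fin_cases j <;>
    simp [Mlm, qlmEigenbasis, qlmEigenbasisInv, mul_apply, Fin.sum_univ_four,
      vecMul_diagonal] <;>
    ring_nf <;> simp [Complex.I_sq] <;> ring_nf

theorem exp_Qlm (l m : ℝ) : NormedSpace.exp (Qlm l m) = Mlm l m := by
  apply map_injective Complex.ofReal_injective
  calc (NormedSpace.exp (Qlm l m)).map ((↑) : ℝ → ℂ)
      = NormedSpace.exp ((Qlm l m).map (↑)) :=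
        map_exp Complex.ofRealHom Complex.continuous_ofReal _
    _ = (Mlm l m).map (↑) := by
      rw [Qlm_map_ofReal, exp_conj_diagonal _ _ qlmEigenbasis_mul_qlmEigenbasisInv, Mlm_map_ofReal]
      congr
      ext i
      fin_cases i <;> simp [← Complex.exp_eq_exp_ℂ, Complex.exp_add, Complex.exp_sub,
        Complex.ofReal_exp, div_neg]

/-- If `2π ≤ λ ≤ 2μ`, then `M(λ,μ)` is an embeddable Markov matrix, but it has no Markov
generator with K3 form: embeddability does not imply K3-embeddability. -/
theorem stmt_12 (l m : ℝ) (h1 : 2 * π ≤ l) (h2 : l ≤ 2 * m) :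
    IsMarkov (Mlm l m) ∧
    (∃ Q : Matrix (Fin 4) (Fin 4) ℝ, IsRate Q ∧ NormedSpace.exp Q = Mlm l m) ∧
    ¬∃ Q : Matrix (Fin 4) (Fin 4) ℝ, IsRate Q ∧ (∃ a b c d : ℝ, Q = K a b c d) ∧
      NormedSpace.exp Q = Mlm l m := by
  have hl : 0 ≤ l := by linarith [pi_pos]
  have hm : log 2 ≤ m := by linarith [log_two_lt_d9, pi_gt_three]
  refine ⟨isMarkov_Mlm hl hm, ⟨Qlm l m, isRate_Qlm h1 h2, exp_Qlm l m⟩, ?_⟩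
  rintro ⟨Q, -, ⟨a, b, c, d, rfl⟩, hexp⟩
  exact exp_K_ne_Mlm a b c d l m hexp
end
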